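/- arXiv:2204.07197 — 2 statements merged into one kernel-verified Lean document; each statement's English description precedes it below -/
import Mathlib

section
/- Let ξ and τ be integrable real random variables on a probability space with τ ≥ 0 almost surely, and define g(x) := E[(τ − (ξ − x)_+)_+] and h(x) := E[(ξ − τ − x)_+]. Let c be a real with 0 < c < E[τ]. Then the set S := {x ∈ ℝ : g(x) ≤ c} is nonempty and bounded above, and x* := sup S satisfies g(x*) = c, and for every x ∈ S, h(x*) ≤ h(x). Thus x* minimizes the expected idling time h subject to the expected-waiting-time constraint g(x) ≤ c. -/
/-!
By dominated convergence with dominating function `|τ|`, the expected waiting time `g` is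
continuous and nondecreasing, tends to `0` at `-∞` and to `E[τ]` at `+∞`. Hence for
`0 < c < E[τ]` the sublevel set `{g ≤ c}` is a nonempty closed half-line, and its right
endpoint `x*` satisfies `g x* = c` by continuity from the right. The expected idling time `h`
is nonincreasing, so `x*` minimizes it over `{g ≤ c}`.
-/

open MeasureTheory Filter Topology

theorem Monotone.bddAbove_setOf_le {α β : Type*} [LinearOrder α] [Preorder β] {g : α → β}
    (hg : Monotone g) {b : α} {c : β} (hb : c < g b) : BddAbove {x | g x ≤ c} :=
  ⟨b, fun _ hx => le_of_not_gt fun hbx => (hb.trans_le (hg hbx.le)).not_ge hx⟩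

theorem Continuous.apply_csSup_setOf_le_eq {α β : Type*} [ConditionallyCompleteLinearOrder α]
    [TopologicalSpace α] [OrderTopology α] [DenselyOrdered α] [NoMaxOrder α]
    [LinearOrder β] [TopologicalSpace β] [OrderClosedTopology β] {g : α → β} (hg : Continuous g)
    {c : β} (hne : {x | g x ≤ c}.Nonempty) (hbdd : BddAbove {x | g x ≤ c}) :
    g (sSup {x | g x ≤ c}) = c := by
  set s := sSup {x | g x ≤ c}
  have hs : g s ≤ c := (isClosed_le hg continuous_const).csSup_mem hne hbdd
  have hright : ∀ᶠ y in 𝓝[>] s, c ≤ g y :=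
    eventually_nhdsWithin_of_forall fun y hy =>
      le_of_not_ge fun hyc => (le_csSup hbdd hyc).not_gt hy
  exact hs.antisymm (ge_of_tendsto hg.continuousAt.continuousWithinAt.tendsto hright)

section WaitingTime

variable {Ω : Type*} {mΩ : MeasurableSpace Ω} {μ : Measure Ω} {ξ τ : Ω → ℝ}

noncomputable def waitingTime (μ : Measure Ω) (ξ τ : Ω → ℝ) (x : ℝ) : ℝ :=
  ∫ ω, max (τ ω - max (ξ ω - x) 0) 0 ∂μ

noncomputable def idlingTime (μ : Measure Ω) (ξ τ : Ω → ℝ) (x : ℝ) : ℝ :=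
  ∫ ω, max (ξ ω - τ ω - x) 0 ∂μ

lemma norm_max_sub_max_le (t s x : ℝ) : ‖max (t - max (s - x) 0) 0‖ ≤ |t| := by
  rw [Real.norm_eq_abs, abs_of_nonneg (le_max_right _ _)]
  exact max_le (by linarith [le_max_right (s - x) 0, le_abs_self t]) (abs_nonneg t)

lemma max_sub_max_eq_max_of_le {t s x : ℝ} (hx : s ≤ x) :
    max (t - max (s - x) 0) 0 = max t 0 := by
  rw [max_eq_right (by linarith : s - x ≤ 0), sub_zero]

lemma max_sub_max_eq_zero_of_le {t s x : ℝ} (hx : x ≤ s - |t|) : max (t - max (s - x) 0) 0 = 0 :=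
  max_eq_right (by linarith [le_max_left (s - x) 0, le_abs_self t])

variable (μ) in
lemma aestronglyMeasurable_waiting (hξ : AEStronglyMeasurable ξ μ)
    (hτ : AEStronglyMeasurable τ μ) (x : ℝ) :
    AEStronglyMeasurable (fun ω => max (τ ω - max (ξ ω - x) 0) 0) μ :=
  (hτ.sub ((hξ.sub aestronglyMeasurable_const).sup aestronglyMeasurable_const)).sup
    aestronglyMeasurable_const

lemma integrable_waiting (hξ : AEStronglyMeasurable ξ μ) (hτ : Integrable τ μ) (x : ℝ) :
    Integrable (fun ω => max (τ ω - max (ξ ω - x) 0) 0) μ :=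
  hτ.abs.mono' (aestronglyMeasurable_waiting μ hξ hτ.1 x)
    (ae_of_all _ fun _ => norm_max_sub_max_le _ _ x)

lemma waitingTime_mono (hξ : AEStronglyMeasurable ξ μ) (hτ : Integrable τ μ) :
    Monotone (waitingTime μ ξ τ) := fun x y hxy =>
  integral_mono (integrable_waiting hξ hτ x) (integrable_waiting hξ hτ y) fun _ =>
    max_le_max_right 0 (sub_le_sub_left (max_le_max_right 0 (sub_le_sub_left hxy _)) _)

lemma continuous_waitingTime (hξ : AEStronglyMeasurable ξ μ) (hτ : Integrable τ μ) :
    Continuous (waitingTime μ ξ τ) :=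
  continuous_of_dominated (aestronglyMeasurable_waiting μ hξ hτ.1)
    (fun x => ae_of_all _ fun _ => norm_max_sub_max_le _ _ x) hτ.abs
    (ae_of_all _ fun _ => by fun_prop)

lemma tendsto_waitingTime {l : Filter ℝ} [l.IsCountablyGenerated] {f : Ω → ℝ}
    (hξ : AEStronglyMeasurable ξ μ) (hτ : Integrable τ μ)
    (hf : ∀ᵐ ω ∂μ, ∀ᶠ x in l, max (τ ω - max (ξ ω - x) 0) 0 = f ω) :
    Tendsto (waitingTime μ ξ τ) l (𝓝 (∫ ω, f ω ∂μ)) :=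
  tendsto_integral_filter_of_dominated_convergence _
    (.of_forall (aestronglyMeasurable_waiting μ hξ hτ.1))
    (.of_forall fun x => ae_of_all _ fun _ => norm_max_sub_max_le _ _ x) hτ.abs
    (hf.mono fun _ h => tendsto_const_nhds.congr' (EventuallyEq.symm h))

lemma tendsto_waitingTime_atTop (hξ : AEStronglyMeasurable ξ μ) (hτ : Integrable τ μ)
    (hτ0 : ∀ᵐ ω ∂μ, 0 ≤ τ ω) :
    Tendsto (waitingTime μ ξ τ) atTop (𝓝 (∫ ω, τ ω ∂μ)) :=
  tendsto_waitingTime hξ hτ <| hτ0.mono fun ω hω => (eventually_ge_atTop (ξ ω)).mono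
    fun _ hx => (max_sub_max_eq_max_of_le hx).trans (max_eq_left hω)

lemma tendsto_waitingTime_atBot (hξ : AEStronglyMeasurable ξ μ) (hτ : Integrable τ μ) :
    Tendsto (waitingTime μ ξ τ) atBot (𝓝 0) := by
  simpa using tendsto_waitingTime (f := 0) hξ hτ <| ae_of_all _ fun ω =>
    (eventually_le_atBot (ξ ω - |τ ω|)).mono fun _ => max_sub_max_eq_zero_of_le

lemma idlingTime_antitone [IsFiniteMeasure μ] (hξ : Integrable ξ μ) (hτ : Integrable τ μ) :
    Antitone (idlingTime μ ξ τ) := fun x y hxy =>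
  integral_mono ((hξ.sub hτ).sub (integrable_const y)).pos_part
    ((hξ.sub hτ).sub (integrable_const x)).pos_part fun _ =>
    max_le_max_right 0 (sub_le_sub_left hxy _)

end WaitingTime

/-- Solution of the response-time-constrained formulation: with
`g(x) = E[(τ - (ξ - x)₊)₊]` the expected waiting time and `h(x) = E[(ξ - τ - x)₊]` the
expected idling time, for any budget `0 < c < E[τ]` the feasible set `S = {x : g(x) ≤ c}`
is nonempty and bounded above, its supremum `x*` satisfies `g(x*) = c`, and `x*`
minimizes `h` over `S`. -/
theorem stmt_11 {Ω : Type*} {mΩ : MeasurableSpace Ω} (μ : Measure Ω)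
    [IsProbabilityMeasure μ]
    (ξ τ : Ω → ℝ) (hξ : Integrable ξ μ) (hτ : Integrable τ μ)
    (hτ0 : ∀ᵐ ω ∂μ, 0 ≤ τ ω)
    (c : ℝ) (hc0 : 0 < c) (hcτ : c < ∫ ω, τ ω ∂μ) :
    {x : ℝ | (∫ ω, max (τ ω - max (ξ ω - x) 0) 0 ∂μ) ≤ c}.Nonempty ∧
    BddAbove {x : ℝ | (∫ ω, max (τ ω - max (ξ ω - x) 0) 0 ∂μ) ≤ c} ∧
    (∫ ω, max (τ ω - max (ξ ω -
      sSup {x : ℝ | (∫ ω', max (τ ω' - max (ξ ω' - x) 0) 0 ∂μ) ≤ c}) 0) 0 ∂μ) = c ∧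
    (∀ x ∈ {x : ℝ | (∫ ω, max (τ ω - max (ξ ω - x) 0) 0 ∂μ) ≤ c},
      (∫ ω, max (ξ ω - τ ω -
        sSup {x : ℝ | (∫ ω', max (τ ω' - max (ξ ω' - x) 0) 0 ∂μ) ≤ c}) 0 ∂μ) ≤
      ∫ ω, max (ξ ω - τ ω - x) 0 ∂μ) := by
  change {x | waitingTime μ ξ τ x ≤ c}.Nonempty ∧ BddAbove {x | waitingTime μ ξ τ x ≤ c} ∧
    waitingTime μ ξ τ (sSup {x | waitingTime μ ξ τ x ≤ c}) = c ∧
    ∀ x ∈ {x | waitingTime μ ξ τ x ≤ c},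
      idlingTime μ ξ τ (sSup {x | waitingTime μ ξ τ x ≤ c}) ≤ idlingTime μ ξ τ x
  have hne : {x | waitingTime μ ξ τ x ≤ c}.Nonempty :=
    ((tendsto_waitingTime_atBot hξ.1 hτ).eventually_lt_const hc0).exists.imp fun _ => le_of_lt
  obtain ⟨b, hb⟩ := ((tendsto_waitingTime_atTop hξ.1 hτ hτ0).eventually_const_lt hcτ).exists
  have hbdd := (waitingTime_mono hξ.1 hτ).bddAbove_setOf_le hb
  exact ⟨hne, hbdd, (continuous_waitingTime hξ.1 hτ).apply_csSup_setOf_le_eq hne hbdd,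
    fun x hx => idlingTime_antitone hξ hτ (le_csSup hbdd hx)⟩
end

section
/- Let ξ and τ be integrable real random variables on a probability space with τ ≥ 0 almost surely, and define g(x) := E[(τ − (ξ − x)_+)_+] and h(x) := E[(ξ − τ − x)_+]. Let c > 0 be a real. (i) If h(0) = E[(ξ − τ)_+] ≤ c, then x* = 0 lies in T := {x ≥ 0 : h(x) ≤ c} and g(0) ≤ g(x) for every x ∈ T. (ii) If h(0) > c, then T is nonempty, and x* := inf T satisfies h(x*) = c and g(x*) ≤ g(x) for every x ∈ T. -/
open MeasureTheory Filter Topology Set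

/-! The idling time `h` is continuous on `[0, ∞)` and tends to `0` at infinity, by dominated
convergence with dominating function `|ξ - τ|`; hence the feasible set `T` is closed and
nonempty, and `inf T ∈ T`. If `h 0 > c`, the intermediate value theorem on `[0, inf T]`
produces a feasible point with `h = c`, which cannot lie below `inf T`. The waiting time `g`
is monotone, so the least feasible point minimizes it over `T`. -/

section Sublevel

variable {α δ : Type*} [ConditionallyCompleteLinearOrder α] [TopologicalSpace α] [OrderTopology α]
  [DenselyOrdered α] [LinearOrder δ] [TopologicalSpace δ] [OrderClosedTopology δ]

theorem ContinuousOn.apply_csInf_sublevel_eq {f : α → δ} {a : α} {c : δ}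
    (hf : ContinuousOn f (Ici a)) (hca : c < f a) (hne : {x | a ≤ x ∧ f x ≤ c}.Nonempty) :
    f (sInf {x | a ≤ x ∧ f x ≤ c}) = c := by
  set T := {x | a ≤ x ∧ f x ≤ c}
  have hbdd : BddBelow T := ⟨a, fun x hx => hx.1⟩
  have hclosed : IsClosed T := hf.preimage_isClosed_of_isClosed isClosed_Ici isClosed_Iic
  obtain ⟨has, hfs⟩ : sInf T ∈ T := hclosed.csInf_mem hne hbdd
  obtain ⟨y, ⟨hay, hys⟩, hfy⟩ : c ∈ f '' Icc a (sInf T) :=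
    intermediate_value_Icc' has (hf.mono Icc_subset_Ici_self) ⟨hfs, hca.le⟩
  have hsy : sInf T ≤ y := csInf_le hbdd ⟨hay, hfy.le⟩
  rwa [le_antisymm hys hsy] at hfy

end Sublevel

section PositivePart

variable {Ω : Type*} {mΩ : MeasurableSpace Ω} {μ : Measure Ω}

lemma abs_max_sub_zero_le_abs {a x : ℝ} (hx : 0 ≤ x) : |max (a - x) 0| ≤ |a| := by
  rw [abs_of_nonneg (le_max_right _ _)]
  exact max_le ((sub_le_self a hx).trans (le_abs_self a)) (abs_nonneg a)

lemma continuousOn_integral_max_sub_zero {f : Ω → ℝ} (hf : Integrable f μ) :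
    ContinuousOn (fun x => ∫ ω, max (f ω - x) 0 ∂μ) (Ici 0) :=
  continuousOn_of_dominated
    (fun _ _ => (hf.aestronglyMeasurable.sub aestronglyMeasurable_const).sup
      aestronglyMeasurable_const)
    (fun _ hx => .of_forall fun _ => abs_max_sub_zero_le_abs hx) hf.abs
    (.of_forall fun _ => by fun_prop)

lemma tendsto_integral_max_sub_zero_atTop {f : Ω → ℝ} (hf : Integrable f μ) :
    Tendsto (fun x => ∫ ω, max (f ω - x) 0 ∂μ) atTop (𝓝 0) := by
  have hlim : ∀ ω, Tendsto (fun x : ℝ => max (f ω - x) 0) atTop (𝓝 0) := fun ω =>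
    tendsto_const_nhds.congr' <| (eventually_ge_atTop (f ω)).mono fun x hx =>
      (max_eq_right (by linarith)).symm
  simpa using tendsto_integral_filter_of_dominated_convergence (fun ω => |f ω|)
    (.of_forall fun _ => (hf.aestronglyMeasurable.sub aestronglyMeasurable_const).sup
      aestronglyMeasurable_const)
    ((eventually_ge_atTop 0).mono fun _ hx => .of_forall fun _ => abs_max_sub_zero_le_abs hx)
    hf.abs (.of_forall hlim)

lemma monotone_integral_max_sub_max_sub_zero {ξ τ : Ω → ℝ} (hξ : AEStronglyMeasurable ξ μ)
    (hτ : Integrable τ μ) :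
    Monotone fun x => ∫ ω, max (τ ω - max (ξ ω - x) 0) 0 ∂μ := by
  have hint : ∀ x, Integrable (fun ω => max (τ ω - max (ξ ω - x) 0) 0) μ := fun x =>
    hτ.abs.mono' ((hτ.aestronglyMeasurable.sub
      ((hξ.sub aestronglyMeasurable_const).sup aestronglyMeasurable_const)).sup
        aestronglyMeasurable_const)
      (.of_forall fun ω => abs_max_sub_zero_le_abs (le_max_right _ _))
  intro x y hxy
  exact integral_mono (hint x) (hint y) fun ω =>
    max_le_max (sub_le_sub_left (max_le_max (by linarith) le_rfl) _) le_rfl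

end PositivePart

theorem stmt_12_general {Ω : Type*} {mΩ : MeasurableSpace Ω} (μ : Measure Ω)
    (ξ τ : Ω → ℝ) (hξ : Integrable ξ μ) (hτ : Integrable τ μ)
    (c : ℝ) (hc : 0 < c) :
    ((∫ ω, max (ξ ω - τ ω - 0) 0 ∂μ) ≤ c →
      (0 : ℝ) ∈ {x : ℝ | 0 ≤ x ∧ (∫ ω, max (ξ ω - τ ω - x) 0 ∂μ) ≤ c} ∧
      ∀ x ∈ {x : ℝ | 0 ≤ x ∧ (∫ ω, max (ξ ω - τ ω - x) 0 ∂μ) ≤ c},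
        (∫ ω, max (τ ω - max (ξ ω - 0) 0) 0 ∂μ) ≤
          ∫ ω, max (τ ω - max (ξ ω - x) 0) 0 ∂μ) ∧
    (c < (∫ ω, max (ξ ω - τ ω - 0) 0 ∂μ) →
      {x : ℝ | 0 ≤ x ∧ (∫ ω, max (ξ ω - τ ω - x) 0 ∂μ) ≤ c}.Nonempty ∧
      (∫ ω, max (ξ ω - τ ω -
        sInf {x : ℝ | 0 ≤ x ∧ (∫ ω', max (ξ ω' - τ ω' - x) 0 ∂μ) ≤ c}) 0 ∂μ) = c ∧
      ∀ x ∈ {x : ℝ | 0 ≤ x ∧ (∫ ω, max (ξ ω - τ ω - x) 0 ∂μ) ≤ c},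
        (∫ ω, max (τ ω - max (ξ ω -
          sInf {x : ℝ | 0 ≤ x ∧ (∫ ω', max (ξ ω' - τ ω' - x) 0 ∂μ) ≤ c}) 0) 0 ∂μ) ≤
          ∫ ω, max (τ ω - max (ξ ω - x) 0) 0 ∂μ) := by
  have hg := monotone_integral_max_sub_max_sub_zero hξ.aestronglyMeasurable hτ
  have hh := continuousOn_integral_max_sub_zero (hξ.sub hτ)
  refine ⟨fun h0 => ⟨⟨le_rfl, h0⟩, fun x hx => hg hx.1⟩, fun h0 => ?_⟩
  have hne : {x : ℝ | 0 ≤ x ∧ (∫ ω, max (ξ ω - τ ω - x) 0 ∂μ) ≤ c}.Nonempty :=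
    (((tendsto_integral_max_sub_zero_atTop (hξ.sub hτ)).eventually_le_const hc).and
      (eventually_ge_atTop 0)).exists.imp fun _ hx => ⟨hx.2, hx.1⟩
  exact ⟨hne, hh.apply_csInf_sublevel_eq h0 hne,
    fun x hx => hg (csInf_le ⟨0, fun _ hy => hy.1⟩ hx)⟩

/-- Solution of the cost-constrained formulation: with
`g(x) = E[(τ - (ξ - x)₊)₊]` the expected waiting time and `h(x) = E[(ξ - τ - x)₊]` the
expected idling time, and `T = {x ≥ 0 : h(x) ≤ c}`:
(i) if `h(0) ≤ c` then `x* = 0` is feasible and minimizes `g` over `T`;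
(ii) if `h(0) > c` then `T` is nonempty, and `x* = inf T` satisfies `h(x*) = c` and
minimizes `g` over `T`. -/
theorem stmt_12 {Ω : Type*} {mΩ : MeasurableSpace Ω} (μ : Measure Ω)
    [IsProbabilityMeasure μ]
    (ξ τ : Ω → ℝ) (hξ : Integrable ξ μ) (hτ : Integrable τ μ)
    (hτ0 : ∀ᵐ ω ∂μ, 0 ≤ τ ω) (c : ℝ) (hc : 0 < c) :
    ((∫ ω, max (ξ ω - τ ω - 0) 0 ∂μ) ≤ c →
      (0 : ℝ) ∈ {x : ℝ | 0 ≤ x ∧ (∫ ω, max (ξ ω - τ ω - x) 0 ∂μ) ≤ c} ∧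
      ∀ x ∈ {x : ℝ | 0 ≤ x ∧ (∫ ω, max (ξ ω - τ ω - x) 0 ∂μ) ≤ c},
        (∫ ω, max (τ ω - max (ξ ω - 0) 0) 0 ∂μ) ≤
          ∫ ω, max (τ ω - max (ξ ω - x) 0) 0 ∂μ) ∧
    (c < (∫ ω, max (ξ ω - τ ω - 0) 0 ∂μ) →
      {x : ℝ | 0 ≤ x ∧ (∫ ω, max (ξ ω - τ ω - x) 0 ∂μ) ≤ c}.Nonempty ∧
      (∫ ω, max (ξ ω - τ ω -
        sInf {x : ℝ | 0 ≤ x ∧ (∫ ω', max (ξ ω' - τ ω' - x) 0 ∂μ) ≤ c}) 0 ∂μ) = c ∧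
      ∀ x ∈ {x : ℝ | 0 ≤ x ∧ (∫ ω, max (ξ ω - τ ω - x) 0 ∂μ) ≤ c},
        (∫ ω, max (τ ω - max (ξ ω -
          sInf {x : ℝ | 0 ≤ x ∧ (∫ ω', max (ξ ω' - τ ω' - x) 0 ∂μ) ≤ c}) 0) 0 ∂μ) ≤
          ∫ ω, max (τ ω - max (ξ ω - x) 0) 0 ∂μ) :=
  stmt_12_general (mΩ := mΩ) μ ξ τ hξ hτ c hc
end
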